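/- Let P be a square complex matrix with P² = I, let C be unitary with P = C·Z₍₁₎·C⁻¹ where Z₍₁₎ = Z⊗I⊗...⊗I. Then R_{-P} = R_P · D where D = C·S₍₁₎†·ω·C⁻¹, i.e., R_{-P} = R_P · C·(S†⊗I⊗...⊗I)·ω·C⁻¹, with R_Q = ((1+ω)/2)I + ((1-ω)/2)Q, S = diag(1,i), ω = e^{iπ/4}. -/
import Mathlib


open Matrix Kronecker

noncomputable def ω : ℂ := Complex.exp (Real.pi * Complex.I / 4)

/-- The 45-degree Pauli rotation associated to a matrix `Q`. -/
noncomputable def R {n : Type*} [Fintype n] [DecidableEq n] (Q : Matrix n n ℂ) : Matrix n n ℂ :=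
  ((1 + ω) / 2) • (1 : Matrix n n ℂ) + ((1 - ω) / 2) • Q

def Z : Matrix (Fin 2) (Fin 2) ℂ := !![1, 0; 0, -1]

def S : Matrix (Fin 2) (Fin 2) ℂ := !![1, 0; 0, Complex.I]


lemma omega_sq : ω * ω = Complex.I := by
  rw [ω, ← Complex.exp_add]
  have : Real.pi * Complex.I / 4 + Real.pi * Complex.I / 4 = (Real.pi/2 : ℝ) * Complex.I := by
    push_cast; ring
  rw [this, Complex.exp_mul_I]
  simp [Complex.cos_pi_div_two, Complex.sin_pi_div_two]

lemma key2 : R (-Z) = ω • (R Z * Sᴴ) := by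
  have h := omega_sq
  ext i j
  fin_cases i <;> fin_cases j <;>
    simp [R, Z, S, Matrix.mul_apply, Fin.sum_univ_two, Matrix.conjTranspose_apply,
      Matrix.one_apply, Complex.ext_iff] <;> ring_nf <;>
    simp [Complex.ext_iff] at h ⊢ <;> constructor <;> nlinarith [h.1, h.2]

lemma keyQ {m : Type*} [Fintype m] [DecidableEq m] :
    R (-(Z ⊗ₖ (1 : Matrix m m ℂ))) =
      R (Z ⊗ₖ (1 : Matrix m m ℂ)) * (Sᴴ ⊗ₖ (1 : Matrix m m ℂ)) *
        (ω • (1 : Matrix (Fin 2 × m) (Fin 2 × m) ℂ)) := by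
  have hR : ∀ A : Matrix (Fin 2) (Fin 2) ℂ, R (A ⊗ₖ (1 : Matrix m m ℂ)) = R A ⊗ₖ 1 := by
    intro A
    simp only [R, Matrix.add_kronecker, Matrix.smul_kronecker, Matrix.one_kronecker_one]
  have h1 : -(Z ⊗ₖ (1 : Matrix m m ℂ)) = (-Z) ⊗ₖ 1 := by
    ext ⟨i, a⟩ ⟨j, b⟩
    simp [Matrix.kroneckerMap_apply]
  rw [h1, hR, hR, Matrix.mul_smul, mul_one, ← Matrix.mul_kronecker_mul, mul_one,
    ← Matrix.smul_kronecker, ← key2]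

/-- `R_{-P} = R_P · D` where `D = C · S₍₁₎† · ω · C⁻¹`, for `P` an involution
conjugate to `Z₍₁₎ = Z ⊗ 1` by a unitary `C`.  The remaining `n-1` qubits are
modeled by an arbitrary finite index type `m`. -/
theorem rotation_neg {m : Type*} [Fintype m] [DecidableEq m]
    (C P : Matrix (Fin 2 × m) (Fin 2 × m) ℂ)
    (hP2 : P ^ 2 = 1)
    (hC : C ∈ Matrix.unitaryGroup (Fin 2 × m) ℂ)
    (hP : P = C * (Z ⊗ₖ (1 : Matrix m m ℂ)) * C⁻¹) :
    R (-P) = R P * (C * (Sᴴ ⊗ₖ (1 : Matrix m m ℂ)) * (ω • (1 : Matrix (Fin 2 × m) (Fin 2 × m) ℂ)) * C⁻¹) := by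
  have hinv : C⁻¹ = Cᴴ := Matrix.inv_eq_left_inv hC.1
  have hCC : C * C⁻¹ = 1 := by rw [hinv]; exact hC.2
  have hCC' : C⁻¹ * C = 1 := by rw [hinv]; exact hC.1
  have hconj : ∀ A : Matrix (Fin 2 × m) (Fin 2 × m) ℂ, R (C * A * C⁻¹) = C * R A * C⁻¹ := by
    intro A
    simp only [R]
    rw [Matrix.mul_add, Matrix.add_mul, Matrix.mul_smul, Matrix.mul_smul,
      Matrix.smul_mul, Matrix.smul_mul, mul_one, ← hCC]
  have hnP : -P = C * (-(Z ⊗ₖ (1 : Matrix m m ℂ))) * C⁻¹ := by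
    rw [hP]; noncomm_ring
  rw [hnP, hconj, hP, hconj, keyQ]
  simp only [Matrix.mul_assoc]
  rw [← Matrix.mul_assoc C⁻¹ C, hCC', Matrix.one_mul]
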